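/- arXiv:1510.02394 — 4 statements merged into one kernel-verified Lean document; each statement's English description precedes it below -/
import Mathlib

section
/- Let G be a simple connected graph with at least one edge and let P₁ be the normalized adjacency matrix D^{-1/2} A D^{-1/2} of the subdivision graph s(G) and P₀ that of G. If μ is a nonzero eigenvalue of P₁, then 2μ² − 1 is an eigenvalue of P₀ with the same multiplicity. -/
/-- The subdivision graph `s(G)`: one new vertex inserted on each edge of `G`. -/
def subdivision {V : Type} (G : SimpleGraph V) : SimpleGraph (V ⊕ G.edgeSet) where
  Adj x y :=
    match x, y with
    | Sum.inl v, Sum.inr e => v ∈ (e : Sym2 V)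
    | Sum.inr e, Sum.inl v => v ∈ (e : Sym2 V)
    | _, _ => False
  symm := ⟨by rintro (v | e) (w | f) h <;> exact h⟩
  loopless := ⟨by rintro (v | e) h <;> exact h⟩

/-- The iterated subdivision `sⁿ(G)`, as a pair (vertex type, graph). -/
def iterSubdiv {V : Type} (G : SimpleGraph V) : ℕ → (W : Type) × SimpleGraph W
  | 0 => ⟨V, G⟩
  | n + 1 => ⟨_, subdivision (iterSubdiv G n).2⟩

instance iterSubdivFinite {V : Type} [Finite V] (G : SimpleGraph V) :
    ∀ n, Finite (iterSubdiv G n).1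
  | 0 => ‹Finite V›
  | n + 1 => by
    haveI := iterSubdivFinite G n
    exact inferInstanceAs (Finite ((iterSubdiv G n).1 ⊕ (iterSubdiv G n).2.edgeSet))

open Classical in
noncomputable def normAdj {V : Type} (G : SimpleGraph V) : Matrix V V ℝ :=
  Matrix.of fun i j =>
    if G.Adj i j then
      1 / Real.sqrt ((Nat.card (G.neighborSet i) : ℝ) * (Nat.card (G.neighborSet j) : ℝ))
    else 0

open Classical in
noncomputable def normLap {V : Type} (G : SimpleGraph V) : Matrix V V ℝ :=
  1 - normAdj G

theorem normAdj_isHermitian {V : Type} (G : SimpleGraph V) : (normAdj G).IsHermitian := by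
  unfold Matrix.IsHermitian
  ext i j
  simp only [Matrix.conjTranspose_apply, normAdj, Matrix.of_apply, star_trivial]
  rw [G.adj_comm]
  rcases em (G.Adj i j) with h | h <;> simp [h, mul_comm]

open Classical in
theorem normLap_isHermitian {V : Type} (G : SimpleGraph V) : (normLap G).IsHermitian :=
  Matrix.isHermitian_one.sub (normAdj_isHermitian G)

/-- `μ` is an eigenvalue of the matrix `M`. -/
def IsEigenvalueM {V : Type} [Finite V] (M : Matrix V V ℝ) (μ : ℝ) : Prop :=
  haveI := Fintype.ofFinite V
  haveI := Classical.decEq V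
  Module.End.HasEigenvalue (Matrix.toLin' M) μ

/-- The multiplicity of `μ` as an eigenvalue of `M` (dimension of the eigenspace). -/
noncomputable def eigMult {V : Type} [Finite V] (M : Matrix V V ℝ) (μ : ℝ) : ℕ :=
  haveI := Fintype.ofFinite V
  haveI := Classical.decEq V
  Module.finrank ℝ ↥(Module.End.eigenspace (Matrix.toLin' M) μ)

open Classical in
noncomputable def kemeny {V : Type} [Finite V] (G : SimpleGraph V) : ℝ :=
  haveI := Fintype.ofFinite V
  haveI := Classical.decEq V
  ∑ i : V, (if (normLap_isHermitian G).eigenvalues i = 0 then 0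
            else ((normLap_isHermitian G).eigenvalues i)⁻¹)

/-- The multiplicative degree-Kirchhoff index `Kf* = 2|E| · Σ_{k≥2} 1/λ_k`. -/
noncomputable def kirchhoffStar {V : Type} [Finite V] (G : SimpleGraph V) : ℝ :=
  2 * (Nat.card G.edgeSet : ℝ) * kemeny G

/-- The number of spanning trees of `G`. -/
noncomputable def numSpanningTrees {V : Type} (G : SimpleGraph V) : ℕ :=
  Nat.card {H : G.Subgraph // H.IsSpanning ∧ H.coe.IsTree}

/-! Index the vertices of `s(G)` by `V ⊕ E`. The normalized adjacency matrix of `s(G)` is then the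
block matrix `[0 B; Bᵀ 0]` with `B v e = [v ∈ e] / √(2 deg v)`, and since the incidence matrix `N`
of `G` satisfies `N Nᵀ = D + A`, we get `B Bᵀ = (1 + P₀) / 2` as soon as no vertex is isolated.
For `μ ≠ 0`, `(x, y) ↦ x` identifies the `μ`-eigenspace of `[0 B; Bᵀ 0]` with the `μ²`-eigenspace
of `B Bᵀ` (the inverse is `x ↦ (x, μ⁻¹ Bᵀ x)`), which is the `(2μ² - 1)`-eigenspace of `P₀`. -/

open Matrix Module End

section BlockEigenspace
variable {K m n : Type*} [Field K] [Fintype m] [Fintype n]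

lemma Matrix.fromBlocks_zero_mulVec_eq_smul_iff (B : Matrix m n K) (C : Matrix n m K) (μ : K)
    (z : m ⊕ n → K) :
    fromBlocks 0 B C 0 *ᵥ z = μ • z ↔
      B *ᵥ (z ∘ Sum.inr) = μ • (z ∘ Sum.inl) ∧ C *ᵥ (z ∘ Sum.inl) = μ • (z ∘ Sum.inr) := by
  simp only [fromBlocks_mulVec, zero_mulVec, zero_add, add_zero, funext_iff, Sum.forall,
    Sum.elim_inl, Sum.elim_inr, Pi.smul_apply, Function.comp_apply]

variable [DecidableEq m] [DecidableEq n]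

lemma Matrix.mem_eigenspace_toLin'_iff {A : Matrix n n K} {μ : K} {x : n → K} :
    x ∈ eigenspace (toLin' A) μ ↔ A *ᵥ x = μ • x := by
  rw [mem_eigenspace_iff, toLin'_apply]

lemma Matrix.eigenspace_toLin'_smul_sub_one (A : Matrix n n K) {a : K} (ha : a ≠ 0) (c : K) :
    eigenspace (toLin' (a • A - 1)) (a * c - 1) = eigenspace (toLin' A) c := by
  ext x
  simp only [mem_eigenspace_toLin'_iff, sub_mulVec, one_mulVec, smul_mulVec, sub_smul,
    one_smul, sub_left_inj, mul_smul]
  exact smul_right_injective _ ha |>.eq_iff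

noncomputable def Matrix.eigenspaceFromBlocksZeroEquiv (B : Matrix m n K) (C : Matrix n m K)
    {μ : K} (hμ : μ ≠ 0) :
    eigenspace (toLin' (fromBlocks 0 B C 0)) μ ≃ₗ[K] eigenspace (toLin' (B * C)) (μ ^ 2) where
  toFun z := ⟨z.1 ∘ Sum.inl, by
    obtain ⟨hB, hC⟩ := (fromBlocks_zero_mulVec_eq_smul_iff B C μ z.1).1
      (mem_eigenspace_toLin'_iff.1 z.2)
    rw [mem_eigenspace_toLin'_iff, ← mulVec_mulVec, hC, mulVec_smul, hB, smul_smul, sq]⟩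
  invFun x := ⟨Sum.elim x.1 (μ⁻¹ • C *ᵥ x.1), by
    have hx := mem_eigenspace_toLin'_iff.1 x.2
    rw [mem_eigenspace_toLin'_iff, fromBlocks_zero_mulVec_eq_smul_iff, Sum.elim_comp_inl,
      Sum.elim_comp_inr, mulVec_smul, mulVec_mulVec, hx, smul_smul, smul_smul,
      show μ⁻¹ * μ ^ 2 = μ by field_simp, mul_inv_cancel₀ hμ, one_smul]
    exact ⟨rfl, rfl⟩⟩
  map_add' _ _ := rfl
  map_smul' _ _ := rfl
  left_inv z := by
    obtain ⟨-, hC⟩ := (fromBlocks_zero_mulVec_eq_smul_iff B C μ z.1).1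
      (mem_eigenspace_toLin'_iff.1 z.2)
    ext (i | j)
    · rfl
    · simp [hC, hμ]
  right_inv _ := rfl

end BlockEigenspace

namespace SimpleGraph

section
variable {V : Type} {G : SimpleGraph V} {v w : V}

lemma normAdj_of_adj (h : G.Adj v w) :
    normAdj G v w = (√(Nat.card (G.neighborSet v) * Nat.card (G.neighborSet w)))⁻¹ := by
  simp [normAdj, h]

lemma normAdj_of_not_adj (h : ¬G.Adj v w) : normAdj G v w = 0 := by
  simp [normAdj, h]

variable (G) {e f : G.edgeSet}

lemma incMatrix_apply_edgeSet {R : Type*} [Zero R] [One R] [DecidableEq V] [DecidableRel G.Adj]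
    (v : V) (e : G.edgeSet) : G.incMatrix R v e = if v ∈ (e : Sym2 V) then 1 else 0 := by
  simp [incMatrix_apply', incidenceSet, e.2]

@[simp] lemma subdivision_adj_inl_inr :
    (subdivision G).Adj (.inl v) (.inr e) ↔ v ∈ (e : Sym2 V) :=
  Iff.rfl

@[simp] lemma subdivision_adj_inr_inl :
    (subdivision G).Adj (.inr e) (.inl v) ↔ v ∈ (e : Sym2 V) :=
  Iff.rfl

@[simp] lemma not_subdivision_adj_inl_inl : ¬(subdivision G).Adj (.inl v) (.inl w) := id

@[simp] lemma not_subdivision_adj_inr_inr : ¬(subdivision G).Adj (.inr e) (.inr f) := id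

lemma natCard_neighborSet_subdivision_inr (e : G.edgeSet) :
    Nat.card ((subdivision G).neighborSet (.inr e)) = 2 := by
  have hset : (subdivision G).neighborSet (.inr e) = Sum.inl '' {v | v ∈ (e : Sym2 V)} := by
    ext (w | f) <;> simp
  rw [hset, Nat.card_image_of_injective Sum.inl_injective]
  obtain ⟨e, he⟩ := e
  induction e with
  | h a b =>
    simp only [Sym2.mem_iff, Set.ofPred_or, Set.ofPred_eq_eq_singleton, Set.singleton_union]
    rw [Nat.card_coe_set_eq, Set.ncard_pair (G.mem_edgeSet.1 he).ne]

end

variable {V : Type} [Fintype V] (G : SimpleGraph V) [DecidableRel G.Adj]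

lemma natCard_neighborSet (v : V) : Nat.card (G.neighborSet v) = G.degree v := by
  rw [Nat.card_eq_fintype_card, card_neighborSet_eq_degree]

lemma degree_pos_of_connected (hG : G.Connected) (hE : G.edgeSet.Nonempty) (v : V) :
    0 < G.degree v := by
  obtain ⟨a, b, hab⟩ := G.ne_bot_iff_exists_adj.1 (G.edgeSet_nonempty.1 hE)
  have := hab.nontrivial
  exact hG.preconnected.degree_pos_of_nontrivial v

variable [DecidableEq V]

lemma natCard_neighborSet_subdivision_inl (v : V) :
    Nat.card ((subdivision G).neighborSet (.inl v)) = G.degree v := by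
  have hset : (subdivision G).neighborSet (.inl v) =
      Sum.inr '' {e : G.edgeSet | v ∈ (e : Sym2 V)} := by
    ext (w | f) <;> simp
  rw [hset, Nat.card_image_of_injective Sum.inr_injective, ← card_incidenceSet_eq_degree,
    ← Nat.card_eq_fintype_card]
  exact Nat.card_congr (Equiv.subtypeSubtypeEquivSubtypeInter (· ∈ G.edgeSet) (v ∈ ·))

noncomputable def normIncMatrix : Matrix V G.edgeSet ℝ :=
  of fun v e => (√(2 * G.degree v))⁻¹ * G.incMatrix ℝ v e

lemma normAdj_subdivision :
    normAdj (subdivision G) = fromBlocks 0 G.normIncMatrix G.normIncMatrixᵀ 0 := by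
  ext (v | e) (w | f)
  · simp [normAdj_of_not_adj]
  · by_cases h : v ∈ (f : Sym2 V)
    · rw [normAdj_of_adj ((subdivision_adj_inl_inr G).2 h), natCard_neighborSet_subdivision_inl,
        natCard_neighborSet_subdivision_inr]
      simp [normIncMatrix, incMatrix_apply_edgeSet, h, mul_comm]
    · simp [normAdj_of_not_adj, h, normIncMatrix, incMatrix_apply_edgeSet]
  · by_cases h : w ∈ (e : Sym2 V)
    · rw [normAdj_of_adj ((subdivision_adj_inr_inl G).2 h), natCard_neighborSet_subdivision_inl,
        natCard_neighborSet_subdivision_inr]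
      simp [normIncMatrix, incMatrix_apply_edgeSet, h]
    · simp [normAdj_of_not_adj, h, normIncMatrix, incMatrix_apply_edgeSet]
  · simp [normAdj_of_not_adj]

lemma sum_edgeSet_incMatrix_mul (v w : V) :
    ∑ e : G.edgeSet, G.incMatrix ℝ v e * G.incMatrix ℝ w e =
      (G.incMatrix ℝ * (G.incMatrix ℝ)ᵀ) v w := by
  rw [Matrix.mul_apply, ← Finset.sum_filter_of_ne (p := (· ∈ G.edgeSet)),
    ← Finset.sum_subtype_eq_sum_filter, Finset.subtype_univ]
  · rfl
  · intro e _ he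
    by_contra h
    simp [incMatrix_apply', incidenceSet, h] at he

lemma two_smul_normIncMatrix_mul_transpose_sub_one (hd : ∀ v, 0 < G.degree v) :
    (2 : ℝ) • (G.normIncMatrix * G.normIncMatrixᵀ) - 1 = normAdj G := by
  ext v w
  have hprod : (G.normIncMatrix * G.normIncMatrixᵀ) v w =
      (√(2 * G.degree v))⁻¹ * (√(2 * G.degree w))⁻¹ * (G.incMatrix ℝ * (G.incMatrix ℝ)ᵀ) v w := by
    rw [Matrix.mul_apply, ← sum_edgeSet_incMatrix_mul, Finset.mul_sum]
    refine Finset.sum_congr rfl fun e _ ↦ ?_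
    simp only [normIncMatrix, transpose_apply, of_apply]
    ring
  rw [Matrix.sub_apply, Matrix.smul_apply, hprod, incMatrix_mul_transpose, of_apply,
    Matrix.one_apply, smul_eq_mul]
  split_ifs with hvw hadj
  · subst hvw
    have hdv : (0 : ℝ) < G.degree v := mod_cast hd v
    rw [normAdj_of_not_adj (G.irrefl (v := v)), ← mul_inv, Real.mul_self_sqrt (by positivity)]
    field_simp
    ring
  · have hdv : (0 : ℝ) < G.degree v := mod_cast hd v
    have hdw : (0 : ℝ) < G.degree w := mod_cast hd w
    rw [normAdj_of_adj hadj, natCard_neighborSet, natCard_neighborSet, ← mul_inv,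
      ← Real.sqrt_mul (by positivity), show 2 * (G.degree v : ℝ) * (2 * G.degree w) =
        2 ^ 2 * (G.degree v * G.degree w) by ring, Real.sqrt_mul (by positivity),
      Real.sqrt_sq zero_le_two]
    field_simp
    ring
  · rw [normAdj_of_not_adj hadj]
    simp

end SimpleGraph

lemma eigMult_eq_finrank {W : Type} [Fintype W] [DecidableEq W] (M : Matrix W W ℝ) (μ : ℝ) :
    eigMult M μ = finrank ℝ (eigenspace (toLin' M) μ) := by
  rw [eigMult, Subsingleton.elim (Fintype.ofFinite W), Subsingleton.elim (Classical.decEq W)]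

lemma isEigenvalueM_iff_eigMult_pos {W : Type} [Finite W] (M : Matrix W W ℝ) (μ : ℝ) :
    IsEigenvalueM M μ ↔ 0 < eigMult M μ :=
  hasEigenvalue_iff.trans Submodule.one_le_finrank_iff.symm

/-- nonzero eigenvalue `μ` of `P₁ = P(s(G))` gives eigenvalue `2μ²−1`
of `P₀ = P(G)` with the same multiplicity. -/
theorem subdivision_eigenvalue_down {V : Type} [Finite V] (G : SimpleGraph V)
    (hG : G.Connected) (hE : 1 ≤ Nat.card G.edgeSet) (μ : ℝ) (hμ : μ ≠ 0)
    (h : IsEigenvalueM (normAdj (subdivision G)) μ) :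
    IsEigenvalueM (normAdj G) (2 * μ ^ 2 - 1) ∧
      eigMult (normAdj G) (2 * μ ^ 2 - 1) = eigMult (normAdj (subdivision G)) μ := by
  classical
  have : Fintype V := Fintype.ofFinite V
  have hdeg : ∀ v, 0 < G.degree v :=
    G.degree_pos_of_connected hG (Set.nonempty_coe_sort.1 (Nat.card_pos_iff.1 hE).1)
  have hmult : eigMult (normAdj G) (2 * μ ^ 2 - 1) = eigMult (normAdj (subdivision G)) μ := by
    rw [eigMult_eq_finrank, eigMult_eq_finrank, G.normAdj_subdivision,
      ← G.two_smul_normIncMatrix_mul_transpose_sub_one hdeg,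
      eigenspace_toLin'_smul_sub_one _ two_ne_zero]
    exact (eigenspaceFromBlocksZeroEquiv _ _ hμ).finrank_eq.symm
  rw [isEigenvalueM_iff_eigMult_pos] at h ⊢
  exact ⟨hmult ▸ h, hmult⟩
end

section
/- Let G be a simple connected graph with N₀ vertices, E₀ edges, and circuit rank r = E₀ − N₀ + 1. For n ≥ 2, the multiplicity of the eigenvalue 0 of the normalized adjacency matrix Pₙ of sⁿ(G) equals r + 1. For n = 1, the multiplicity of 0 as an eigenvalue of P₁ equals r − 1 if G contains an odd cycle, and r + 1 if G is bipartite. -/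
/-!
The normalized adjacency matrix differs from the adjacency matrix by an invertible diagonal
scaling, so both have the same nullity. The adjacency matrix of `s(H)` is the block matrix
`[[0, B], [Bᵀ, 0]]`, where `B` is the vertex-edge incidence matrix of `H`; its nullity is
therefore `|V| + |E| - 2 rank B`, and `rank B = |V| - dim ker Bᵀ`. The kernel of `Bᵀ` consists
of the functions changing sign along every edge: on a connected graph it is `0` when there is an
odd cycle and a line when the graph is bipartite. Finally `sⁿ(G)` is connected and, for `n ≥ 1`,
bipartite, and subdivision preserves `|E| - |V|`.
-/

open Matrix Module

namespace Submodule

variable {R M N : Type*} [Semiring R] [AddCommMonoid M] [Module R M] [AddCommMonoid N]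
  [Module R N]

def prodEquivProd (p : Submodule R M) (q : Submodule R N) : p.prod q ≃ₗ[R] p × q where
  toFun x := (⟨x.1.1, x.2.1⟩, ⟨x.1.2, x.2.2⟩)
  invFun y := ⟨(y.1, y.2), y.1.2, y.2.2⟩
  map_add' _ _ := rfl
  map_smul' _ _ := rfl
  left_inv _ := rfl
  right_inv _ := rfl

end Submodule

namespace Matrix

variable {R : Type*} [Field R] {k l m n : Type*} [Fintype k] [Fintype n]

theorem rank_add_finrank_ker_mulVecLin (A : Matrix m n R) :
    A.rank + finrank R (LinearMap.ker A.mulVecLin) = Fintype.card n := by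
  rw [rank, LinearMap.finrank_range_add_finrank_ker, finrank_fintype_fun_eq_card]

theorem ker_mulVecLin_fromBlocks_zero_zero (B : Matrix l n R) (C : Matrix m k R) :
    LinearMap.ker (fromBlocks 0 B C 0).mulVecLin =
      ((LinearMap.ker C.mulVecLin).prod (LinearMap.ker B.mulVecLin)).comap
        (LinearEquiv.sumArrowLequivProdArrow k n R R).toLinearMap := by
  ext x
  simp only [LinearMap.mem_ker, mulVecLin_apply, fromBlocks_mulVec, zero_mulVec, zero_add,
    add_zero, funext_iff, Sum.forall, Sum.elim_inl, Sum.elim_inr, Pi.zero_apply,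
    Submodule.mem_comap, Submodule.mem_prod, LinearEquiv.coe_coe]
  exact and_comm

theorem rank_fromBlocks_zero_zero (B : Matrix l n R) (C : Matrix m k R) :
    (fromBlocks 0 B C 0).rank = B.rank + C.rank := by
  have hM := rank_add_finrank_ker_mulVecLin (fromBlocks 0 B C 0)
  have hB := rank_add_finrank_ker_mulVecLin B
  have hC := rank_add_finrank_ker_mulVecLin C
  rw [ker_mulVecLin_fromBlocks_zero_zero, Submodule.comap_equiv_eq_map_symm,
    LinearEquiv.finrank_map_eq, (Submodule.prodEquivProd _ _).finrank_eq, finrank_prod,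
    Fintype.card_sum] at hM
  omega

end Matrix

theorem eigMult_zero_add_rank {V : Type} [Fintype V] (M : Matrix V V ℝ) :
    eigMult M 0 + M.rank = Fintype.card V := by
  classical
  rw [← M.rank_add_finrank_ker_mulVecLin, add_comm, eigMult,
    Subsingleton.elim (Fintype.ofFinite V) ‹_›, Module.End.eigenspace_zero, toLin'_apply']

section NormAdj

variable {V : Type} (G : SimpleGraph V)

theorem exists_normAdj_eq_diagonal_mul_adjMatrix_mul_diagonal [Fintype V] [DecidableEq V]
    [DecidableRel G.Adj] :
    ∃ c : V → ℝ, (∀ v, c v ≠ 0) ∧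
      normAdj G = diagonal c * G.adjMatrix ℝ * diagonal c := by
  -- Isolated vertices get weight `1` to keep the scaling invertible; their rows vanish anyway.
  let c : V → ℝ := fun v => if G.degree v = 0 then 1 else (√(G.degree v))⁻¹
  have hc : ∀ v, G.degree v ≠ 0 → c v = (√(G.degree v))⁻¹ := fun v h => if_neg h
  refine ⟨c, fun v => ?_, ?_⟩
  · by_cases h : G.degree v = 0
    · simp [c, h]
    · simp [hc v h, h]
  ext u v
  simp only [diagonal_mul, mul_diagonal, SimpleGraph.adjMatrix_apply, normAdj, of_apply,
    Nat.card_eq_fintype_card, SimpleGraph.card_neighborSet_eq_degree]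
  by_cases huv : G.Adj u v
  · have hu := (G.degree_pos_iff_exists_adj u).2 ⟨v, huv⟩
    have hv := (G.degree_pos_iff_exists_adj v).2 ⟨u, huv.symm⟩
    rw [if_pos huv, if_pos huv, hc u hu.ne', hc v hv.ne', Real.sqrt_mul (Nat.cast_nonneg _),
      mul_one, one_div, mul_inv]
  · simp [huv]

theorem rank_normAdj [Fintype V] [DecidableRel G.Adj] :
    (normAdj G).rank = (G.adjMatrix ℝ).rank := by
  classical
  obtain ⟨c, hc, h⟩ := exists_normAdj_eq_diagonal_mul_adjMatrix_mul_diagonal G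
  have hdet : IsUnit (diagonal c).det := by
    rw [det_diagonal]
    exact (Finset.prod_ne_zero_iff.2 fun v _ => hc v).isUnit
  rw [h, rank_mul_eq_left_of_isUnit_det _ _ hdet, rank_mul_eq_right_of_isUnit_det _ _ hdet]

end NormAdj

section AlternatingSpace

variable {W : Type} (H : SimpleGraph W)

def alternatingSpace : Submodule ℝ (W → ℝ) where
  carrier := {y | ∀ u w, H.Adj u w → y u + y w = 0}
  add_mem' ha hb u w h := by simp only [Pi.add_apply]; linarith [ha u w h, hb u w h]
  zero_mem' _ _ _ := by simp
  smul_mem' c y hy u w h := by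
    simp only [Pi.smul_apply, smul_eq_mul, ← mul_add, hy u w h, mul_zero]

variable {H}

theorem mem_alternatingSpace {y : W → ℝ} :
    y ∈ alternatingSpace H ↔ ∀ u w, H.Adj u w → y u + y w = 0 := Iff.rfl

theorem apply_eq_neg_one_pow_length_mul_of_mem_alternatingSpace {y : W → ℝ}
    (hy : y ∈ alternatingSpace H) {u v : W} (p : H.Walk u v) :
    y v = (-1) ^ p.length * y u := by
  induction p with
  | nil => simp
  | @cons a b c h q ih =>
    rw [SimpleGraph.Walk.length_cons, pow_succ, ih, eq_neg_of_add_eq_zero_right (hy a b h)]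
    ring

theorem eq_zero_of_mem_alternatingSpace (hH : H.Connected) {y : W → ℝ}
    (hy : y ∈ alternatingSpace H) {u : W} (hu : y u = 0) : y = 0 := by
  funext v
  rw [apply_eq_neg_one_pow_length_mul_of_mem_alternatingSpace hy (hH u v).some, hu, mul_zero,
    Pi.zero_apply]

theorem alternatingSpace_eq_bot_of_odd_cycle (hH : H.Connected)
    (hodd : ∃ (v : W) (w : H.Walk v v), w.IsCycle ∧ Odd w.length) :
    alternatingSpace H = ⊥ := by
  obtain ⟨v, c, -, hc⟩ := hodd
  refine (Submodule.eq_bot_iff _).2 fun y hy =>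
    eq_zero_of_mem_alternatingSpace hH hy (u := v) ?_
  have := apply_eq_neg_one_pow_length_mul_of_mem_alternatingSpace hy c
  rw [hc.neg_one_pow] at this
  linarith

theorem finrank_alternatingSpace_of_colorable_two (hH : H.Connected) (hc : H.Colorable 2) :
    finrank ℝ (alternatingSpace H) = 1 := by
  obtain ⟨u⟩ := hH.nonempty
  obtain ⟨C⟩ := hc
  let eval : alternatingSpace H →ₗ[ℝ] ℝ :=
    (LinearMap.proj u).comp (alternatingSpace H).subtype
  have heval : Function.Injective eval := fun a b hab => by
    simpa [sub_eq_zero] using eq_zero_of_mem_alternatingSpace hH (sub_mem a.2 b.2)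
      (u := u) (by simpa [eval, sub_eq_zero] using hab)
  have : Module.Finite ℝ (alternatingSpace H) := .of_injective eval heval
  let y : W → ℝ := fun w => if C w = 0 then 1 else -1
  have hy : y ∈ alternatingSpace H := fun a b h => by
    have hab := C.valid h
    simp only [y]
    generalize C a = i at hab ⊢
    generalize C b = j at hab ⊢
    fin_cases i <;> fin_cases j <;> simp_all
  have hpos : 1 ≤ finrank ℝ (alternatingSpace H) := by
    refine Submodule.one_le_finrank_iff.2 ((Submodule.ne_bot_iff _).2 ⟨y, hy, fun h => ?_⟩)
    have := congrFun h u
    simp only [y, Pi.zero_apply] at this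
    split_ifs at this <;> norm_num at this
  have := LinearMap.finrank_le_finrank_of_injective heval
  rw [finrank_self] at this
  omega

end AlternatingSpace

section Subdivision

variable {W : Type} {H : SimpleGraph W}

@[simp] theorem subdivision_adj_inl_inr {v : W} {e : H.edgeSet} :
    (subdivision H).Adj (.inl v) (.inr e) ↔ v ∈ (e : Sym2 W) := Iff.rfl

@[simp] theorem subdivision_adj_inr_inl {v : W} {e : H.edgeSet} :
    (subdivision H).Adj (.inr e) (.inl v) ↔ v ∈ (e : Sym2 W) := Iff.rfl

@[simp] theorem not_subdivision_adj_inl_inl {v w : W} :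
    ¬(subdivision H).Adj (.inl v) (.inl w) := id

@[simp] theorem not_subdivision_adj_inr_inr {e f : H.edgeSet} :
    ¬(subdivision H).Adj (.inr e) (.inr f) := id

theorem reachable_subdivision_inl {u v : W} (h : H.Reachable u v) :
    (subdivision H).Reachable (.inl u) (.inl v) := by
  obtain ⟨p⟩ := h
  induction p with
  | nil => rfl
  | @cons a b c hab q ih =>
    have ha : (subdivision H).Adj (.inl a) (.inr ⟨s(a, b), hab⟩) := Sym2.mem_mk_left a b
    have hb : (subdivision H).Adj (.inr ⟨s(a, b), hab⟩) (.inl b) := Sym2.mem_mk_right a b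
    exact ha.reachable.trans (hb.reachable.trans ih)

theorem connected_subdivision (hH : H.Connected) : (subdivision H).Connected := by
  obtain ⟨u⟩ := hH.nonempty
  refine (SimpleGraph.connected_iff_exists_forall_reachable _).2 ⟨.inl u, ?_⟩
  rintro (v | ⟨e, he⟩)
  · exact reachable_subdivision_inl (hH u v)
  · induction e using Sym2.ind with
    | _ a b =>
      have ha : (subdivision H).Adj (.inl a) (.inr ⟨s(a, b), he⟩) := Sym2.mem_mk_left a b
      exact (reachable_subdivision_inl (hH u a)).trans ha.reachable

theorem colorable_two_subdivision (H : SimpleGraph W) : (subdivision H).Colorable 2 :=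
  ⟨.mk (Sum.elim (fun _ => 0) fun _ => 1) (by rintro (v | e) (w | f) h <;> simp_all)⟩

noncomputable def dartEquivEdgeSetSubdivision (H : SimpleGraph W) :
    H.Dart ≃ (subdivision H).edgeSet := by
  refine Equiv.ofBijective
    (fun d => ⟨s(.inl d.fst, .inr ⟨d.edge, d.edge_mem⟩), Sym2.mem_mk_left _ _⟩)
    ⟨fun d₁ d₂ h => ?_, ?_⟩
  · replace h := congrArg Subtype.val h
    simp only [Sym2.eq_iff, Sum.inl.injEq, Sum.inr.injEq, Subtype.mk.injEq, reduceCtorEq,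
      and_false, or_false] at h
    rcases (SimpleGraph.dart_edge_eq_iff d₁ d₂).1 h.2 with h' | h'
    · exact h'
    · exact absurd (h.1.symm.trans (congrArg (·.fst) h')) d₂.fst_ne_snd
  · rintro ⟨e, he⟩
    induction e using Sym2.ind with
    | _ x y =>
    match x, y, he with
    | .inl v, .inr ⟨e, he⟩, hv =>
      refine ⟨⟨(v, Sym2.Mem.other hv), H.mem_edgeSet.1 ((Sym2.other_spec hv).symm ▸ he)⟩,
        ?_⟩
      simp only [SimpleGraph.Dart.edge, Sym2.other_spec hv]
    | .inr ⟨e, he⟩, .inl v, hv =>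
      refine ⟨⟨(v, Sym2.Mem.other hv), H.mem_edgeSet.1 ((Sym2.other_spec hv).symm ▸ he)⟩,
        ?_⟩
      simp only [SimpleGraph.Dart.edge, Sym2.other_spec hv]
      exact Subtype.ext Sym2.eq_swap

theorem card_edgeSet_subdivision [Finite W] (H : SimpleGraph W) :
    Nat.card (subdivision H).edgeSet = 2 * Nat.card H.edgeSet := by
  classical
  have := Fintype.ofFinite W
  rw [← Nat.card_congr (dartEquivEdgeSetSubdivision H), Nat.card_eq_fintype_card,
    SimpleGraph.dart_card_eq_twice_card_edges, SimpleGraph.edgeFinset_card,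
    Nat.card_eq_fintype_card]

theorem card_edgeSet_sub_card_subdivision [Finite W] (H : SimpleGraph W) :
    (Nat.card (subdivision H).edgeSet : ℤ) - Nat.card (W ⊕ H.edgeSet) =
      Nat.card H.edgeSet - Nat.card W := by
  rw [card_edgeSet_subdivision, Nat.card_sum]
  push_cast
  ring

variable (H)

open Classical in
noncomputable def edgeIncMatrix : Matrix W H.edgeSet ℝ :=
  of fun v e => if v ∈ (e : Sym2 W) then 1 else 0

theorem ker_mulVecLin_transpose_edgeIncMatrix [Fintype W] :
    LinearMap.ker (edgeIncMatrix H)ᵀ.mulVecLin = alternatingSpace H := by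
  classical
  have hsum : ∀ {a b : W} (h : H.Adj a b) (y : W → ℝ),
      ((edgeIncMatrix H)ᵀ *ᵥ y) ⟨s(a, b), H.mem_edgeSet.2 h⟩ = y a + y b := by
    intro a b h y
    simp only [mulVec, dotProduct, transpose_apply, edgeIncMatrix, of_apply, Sym2.mem_iff,
      ite_mul, one_mul, zero_mul]
    rw [Fintype.sum_eq_add a b h.ne fun x hx => by simp [hx]]
    simp [h.ne.symm]
  ext y
  simp only [LinearMap.mem_ker, mulVecLin_apply, mem_alternatingSpace]
  constructor
  · intro hy u w huw
    rw [← hsum huw, hy, Pi.zero_apply]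
  · intro hy
    funext ⟨e, he⟩
    induction e using Sym2.ind with
    | _ a b => rw [hsum he, Pi.zero_apply, hy a b he]

open Classical in
theorem adjMatrix_subdivision :
    (subdivision H).adjMatrix ℝ = fromBlocks 0 (edgeIncMatrix H) (edgeIncMatrix H)ᵀ 0 := by
  ext (v | e) (w | f) <;> simp [SimpleGraph.adjMatrix_apply, edgeIncMatrix]

theorem eigMult_normAdj_subdivision_zero [Finite W] :
    (eigMult (normAdj (subdivision H)) 0 : ℤ) =
      Nat.card H.edgeSet - Nat.card W + 2 * finrank ℝ (alternatingSpace H) := by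
  classical
  have := Fintype.ofFinite W
  have := Fintype.ofFinite H.edgeSet
  have hsub := eigMult_zero_add_rank (normAdj (subdivision H))
  rw [rank_normAdj, adjMatrix_subdivision, rank_fromBlocks_zero_zero, rank_transpose,
    Fintype.card_sum] at hsub
  have hinc := rank_add_finrank_ker_mulVecLin (edgeIncMatrix H)ᵀ
  rw [rank_transpose, ker_mulVecLin_transpose_edgeIncMatrix] at hinc
  rw [Nat.card_eq_fintype_card, Nat.card_eq_fintype_card]
  omega

end Subdivision

section IterSubdiv

variable {V : Type} {G : SimpleGraph V}

theorem connected_iterSubdiv (hG : G.Connected) : ∀ n, (iterSubdiv G n).2.Connected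
  | 0 => hG
  | n + 1 => connected_subdivision (connected_iterSubdiv hG n)

theorem card_edgeSet_sub_card_iterSubdiv [Finite V] (G : SimpleGraph V) : ∀ n,
    (Nat.card (iterSubdiv G n).2.edgeSet : ℤ) - Nat.card (iterSubdiv G n).1 =
      Nat.card G.edgeSet - Nat.card V
  | 0 => rfl
  | n + 1 =>
    (card_edgeSet_sub_card_subdivision _).trans (card_edgeSet_sub_card_iterSubdiv G n)

end IterSubdiv

/-- multiplicity of the eigenvalue `0` of `Pₙ = P(sⁿ(G))`:
`r + 1` for `n ≥ 2`; for `n = 1` it is `r − 1` if `G` has an odd cycle and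
`r + 1` if `G` is bipartite, where `r = E₀ − N₀ + 1` is the circuit rank. -/
theorem iterSubdiv_eigMult_zero {V : Type} [Finite V] (G : SimpleGraph V)
    (hG : G.Connected) (r : ℤ)
    (hr : r = (Nat.card G.edgeSet : ℤ) - (Nat.card V : ℤ) + 1) :
    (∀ n, 2 ≤ n → (eigMult (normAdj (iterSubdiv G n).2) 0 : ℤ) = r + 1) ∧
    ((∃ (v : V) (w : G.Walk v v), w.IsCycle ∧ Odd w.length) →
      (eigMult (normAdj (iterSubdiv G 1).2) 0 : ℤ) = r - 1) ∧
    (G.Colorable 2 → (eigMult (normAdj (iterSubdiv G 1).2) 0 : ℤ) = r + 1) := by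
  refine ⟨fun n hn => ?_, fun hodd => ?_, fun hcol => ?_⟩
  · obtain ⟨m, rfl⟩ : ∃ m, n = m + 2 := ⟨n - 2, by omega⟩
    have h := eigMult_normAdj_subdivision_zero (iterSubdiv G (m + 1)).2
    rw [finrank_alternatingSpace_of_colorable_two (connected_iterSubdiv hG (m + 1))
      (colorable_two_subdivision (iterSubdiv G m).2),
      card_edgeSet_sub_card_iterSubdiv] at h
    exact h.trans (by rw [hr]; ring)
  · have h := eigMult_normAdj_subdivision_zero G
    rw [alternatingSpace_eq_bot_of_odd_cycle hG hodd, finrank_bot] at h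
    exact h.trans (by rw [hr]; ring)
  · have h := eigMult_normAdj_subdivision_zero G
    rw [finrank_alternatingSpace_of_colorable_two hG hcol] at h
    exact h.trans (by rw [hr]; ring)
end

section
/- Let G be a simple connected graph with circuit rank r. The number of spanning trees of the subdivision graph satisfies N_st(s(G)) = 2^r · N_st(G), and hence N_st(sⁿ(G)) = 2^{rn} · N_st(G) for all n ≥ 0. -/
/-!
A spanning tree `K` of `s(G)` contains a half of every subdivided edge, and the edges of `G` with
both halves in `K` form a spanning tree `T` of `G`; `K` is recovered from `T` together with the
choice, for each of the `|E| - |V| + 1 = r` edges outside `T`, of the endpoint whose half `K`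
keeps. In both directions tree-ness follows from connectivity and the edge count
`|E(K)| = |E(G)| + |E(T)|`. Subdivision adds `|E|` vertices and `|E|` edges, so it preserves `r`,
and the iterated formula follows by induction.
-/

open SimpleGraph Sum

namespace SimpleGraph

variable {V : Type} {G : SimpleGraph V}

lemma numSpanningTrees_eq_card :
    numSpanningTrees G = Nat.card {T : SimpleGraph V // T ≤ G ∧ T.IsTree} :=
  Nat.card_congr
    { toFun := fun H => ⟨H.1.spanningCoe, H.1.spanningCoe_le,
        (H.1.spanningCoeEquivCoeOfSpanning H.2.1).isTree_iff.mpr H.2.2⟩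
      invFun := fun T => ⟨toSubgraph T.1 T.2.1, toSubgraph.isSpanning _ _,
        (Subgraph.spanningCoeEquivCoeOfSpanning _
          (toSubgraph.isSpanning _ _)).isTree_iff.mp T.2.2⟩
      left_inv := fun H => Subtype.ext (Subgraph.ext (Set.eq_univ_of_forall H.2.1).symm rfl)
      right_inv := fun _ => rfl }

lemma card_mem_sym2_of_mem_edgeSet {e : Sym2 V} (he : e ∈ G.edgeSet) :
    Nat.card {v // v ∈ e} = 2 := by
  classical
  rw [← Sym2.card_toFinset_of_not_isDiag e (G.not_isDiag_of_mem_edgeSet he),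
    ← Nat.card_eq_finsetCard]
  exact Nat.card_congr (Equiv.subtypeEquivRight fun v => Sym2.mem_toFinset.symm)

lemma Reachable.lift {W : Type} {H : SimpleGraph W} (f : V → W)
    (hf : ∀ a b, G.Adj a b → H.Reachable (f a) (f b)) {u v : V} (h : G.Reachable u v) :
    H.Reachable (f u) (f v) := by
  obtain ⟨p⟩ := h
  induction p with
  | nil => rfl
  | cons hab _ ih => exact (hf _ _ hab).trans ih

section Subdivision

variable {K K' : SimpleGraph (V ⊕ G.edgeSet)}

lemma le_subdivision_ext (hK : K ≤ subdivision G) (hK' : K' ≤ subdivision G)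
    (h : ∀ v e, K.Adj (inl v) (inr e) ↔ K'.Adj (inl v) (inr e)) : K = K' := by
  ext (v | e) (w | e')
  · exact iff_of_false (fun h => hK h) (fun h => hK' h)
  · exact h v e'
  · rw [K.adj_comm, K'.adj_comm]
    exact h w e
  · exact iff_of_false (fun h => hK h) (fun h => hK' h)

noncomputable def sigmaEquivEdgeSetOfLESubdivision (hK : K ≤ subdivision G) :
    (Σ e : G.edgeSet, {v : V // K.Adj (inl v) (inr e)}) ≃ K.edgeSet := by
  refine Equiv.ofBijective (fun p => ⟨s(inl p.2.1, inr p.1), p.2.2⟩) ⟨?_, ?_⟩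
  · rintro ⟨e, v, hv⟩ ⟨e', v', hv'⟩ h
    obtain ⟨rfl, rfl⟩ : v = v' ∧ e = e' := by simpa using congrArg Subtype.val h
    rfl
  · rintro ⟨x, hx⟩
    induction x using Sym2.ind with
    | _ x y =>
      rcases x with v | e <;> rcases y with w | e'
      · exact (hK hx).elim
      · exact ⟨⟨e', v, hx⟩, rfl⟩
      · exact ⟨⟨e, w, hx.symm⟩, Subtype.ext Sym2.eq_swap⟩
      · exact (hK hx).elim

def unsubdivide (K : SimpleGraph (V ⊕ G.edgeSet)) : SimpleGraph V :=
  fromEdgeSet {e | ∃ he : e ∈ G.edgeSet, ∀ v ∈ e, K.Adj (inl v) (inr ⟨e, he⟩)}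

lemma unsubdivide_le : unsubdivide K ≤ G := fun _ _ h => h.1.1

lemma mem_edgeSet_unsubdivide (e : G.edgeSet) :
    (e : Sym2 V) ∈ (unsubdivide K).edgeSet ↔ ∀ v ∈ (e : Sym2 V), K.Adj (inl v) (inr e) := by
  simp [unsubdivide, G.not_isDiag_of_mem_edgeSet e.2]

lemma mem_edgeSet_unsubdivide_of_adj_inr (hK : K ≤ subdivision G) {e : G.edgeSet} {v w : V}
    (hv : K.Adj (inl v) (inr e)) (hw : K.Adj (inl w) (inr e)) (hvw : v ≠ w) :
    (e : Sym2 V) ∈ (unsubdivide K).edgeSet := by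
  have he : (e : Sym2 V) = s(v, w) := (Sym2.mem_and_mem_iff hvw).mp ⟨hK hv, hK hw⟩
  refine (mem_edgeSet_unsubdivide e).mpr fun x hx => ?_
  rw [he, Sym2.mem_iff] at hx
  rcases hx with rfl | rfl <;> assumption

lemma reachable_unsubdivide_of_adj_inr (hK : K ≤ subdivision G) {e : G.edgeSet} {v w : V}
    (hv : K.Adj (inl v) (inr e)) (hw : K.Adj (inl w) (inr e)) :
    (unsubdivide K).Reachable v w := by
  by_cases hvw : v = w
  · exact hvw ▸ Reachable.refl v
  · have he := mem_edgeSet_unsubdivide_of_adj_inr hK hv hw hvw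
    rw [(Sym2.mem_and_mem_iff hvw).mp ⟨hK hv, hK hw⟩, mem_edgeSet] at he
    exact he.reachable

lemma Connected.exists_adj_inr (hK : K ≤ subdivision G) (hconn : K.Connected) (e : G.edgeSet) :
    ∃ v, K.Adj (inl v) (inr e) := by
  have : Nontrivial (V ⊕ G.edgeSet) := ⟨inl (e : Sym2 V).out.1, inr e, inl_ne_inr⟩
  obtain ⟨v | e', h⟩ := hconn.preconnected.exists_adj_of_nontrivial (inr e)
  · exact ⟨v, h.symm⟩
  · exact (hK h).elim

lemma unsubdivide_preconnected (hK : K ≤ subdivision G) (hconn : K.Preconnected)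
    (hhalf : ∀ e, ∃ v, K.Adj (inl v) (inr e)) : (unsubdivide K).Preconnected := by
  choose half hhalf using hhalf
  intro u v
  refine Reachable.lift (Sum.elim id half) ?_ (hconn (inl u) (inl v))
  rintro (a | e) (b | e') h
  · exact (hK h).elim
  · exact reachable_unsubdivide_of_adj_inr hK h (hhalf e')
  · exact reachable_unsubdivide_of_adj_inr hK (hhalf e) h.symm
  · exact (hK h).elim

open Classical in
lemma card_adj_inr (hK : K ≤ subdivision G) (e : G.edgeSet) (hne : ∃ v, K.Adj (inl v) (inr e)) :
    Nat.card {v // K.Adj (inl v) (inr e)} =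
      if (e : Sym2 V) ∈ (unsubdivide K).edgeSet then 2 else 1 := by
  split_ifs with he
  · rw [← card_mem_sym2_of_mem_edgeSet e.2]
    exact Nat.card_congr (Equiv.subtypeEquivRight fun v =>
      ⟨fun h => hK h, (mem_edgeSet_unsubdivide e).mp he v⟩)
  · obtain ⟨v, hv⟩ := hne
    refine Nat.card_eq_one_iff_exists.mpr ⟨⟨v, hv⟩, fun w => Subtype.ext ?_⟩
    by_contra hwv
    exact he (mem_edgeSet_unsubdivide_of_adj_inr hK w.2 hv hwv)

lemma card_edgeSet_of_le_subdivision [Finite V] (hK : K ≤ subdivision G)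
    (hhalf : ∀ e, ∃ v, K.Adj (inl v) (inr e)) :
    Nat.card K.edgeSet = Nat.card G.edgeSet + Nat.card (unsubdivide K).edgeSet := by
  classical
  have := Fintype.ofFinite G.edgeSet
  rw [← Nat.card_congr (sigmaEquivEdgeSetOfLESubdivision hK), Nat.card_sigma,
    Finset.sum_congr rfl fun e _ => card_adj_inr hK e (hhalf e), Finset.sum_ite,
    Finset.sum_const, Finset.sum_const, smul_eq_mul, smul_eq_mul, mul_one]
  have hunsub : Nat.card (unsubdivide K).edgeSet =
      (Finset.univ.filter fun e : G.edgeSet => (e : Sym2 V) ∈ (unsubdivide K).edgeSet).card := by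
    rw [← Fintype.card_subtype, ← Nat.card_eq_fintype_card]
    exact (Nat.card_congr
      (Equiv.subtypeSubtypeEquivSubtype fun h => edgeSet_mono unsubdivide_le h)).symm
  have hsplit := Finset.card_filter_add_card_filter_not
    (s := Finset.univ) fun e : G.edgeSet => (e : Sym2 V) ∈ (unsubdivide K).edgeSet
  rw [Finset.card_univ, ← Nat.card_eq_fintype_card] at hsplit
  omega

lemma unsubdivide_isTree [Finite V] (hK : K ≤ subdivision G) (hKt : K.IsTree) :
    (unsubdivide K).IsTree := by
  rw [isTree_iff_connected_and_card] at hKt ⊢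
  obtain ⟨hconn, hcard⟩ := hKt
  have hhalf := hconn.exists_adj_inr hK
  have : Nonempty V := by
    obtain v | e := hconn.nonempty.some
    exacts [⟨v⟩, ⟨(e : Sym2 V).out.1⟩]
  refine ⟨⟨unsubdivide_preconnected hK hconn.preconnected hhalf⟩, ?_⟩
  rw [card_edgeSet_of_le_subdivision hK hhalf, Nat.card_sum] at hcard
  omega

end Subdivision

section Lift

variable (G) in
abbrev EndpointChoice (T : SimpleGraph V) : Type :=
  ∀ e : ↥(G.edgeSet \ T.edgeSet), {v : V // v ∈ (e : Sym2 V)}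

variable {T : SimpleGraph V} (f : EndpointChoice G T)

/-- Edges of `T` keep both halves; every other edge of `G` keeps only the half at its chosen
endpoint. -/
def liftSubdivision (T : SimpleGraph V) (f : EndpointChoice G T) :
    SimpleGraph (V ⊕ G.edgeSet) where
  Adj x y :=
    match x, y with
    | inl v, inr e | inr e, inl v =>
        v ∈ (e : Sym2 V) ∧ ∀ h : (e : Sym2 V) ∉ T.edgeSet, (f ⟨e, e.2, h⟩ : V) = v
    | _, _ => False
  symm := ⟨by rintro (v | e) (w | e') h <;> exact h⟩
  loopless := ⟨by rintro (v | e) h <;> exact h⟩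

lemma liftSubdivision_le : liftSubdivision T f ≤ subdivision G := by
  rintro (v | e) (w | e') h
  exacts [h.elim, h.1, h.1, h.elim]

lemma liftSubdivision_exists_adj_inr (e : G.edgeSet) :
    ∃ v, (liftSubdivision T f).Adj (inl v) (inr e) := by
  by_cases he : (e : Sym2 V) ∈ T.edgeSet
  · exact ⟨(e : Sym2 V).out.1, Sym2.out_fst_mem _, fun h => absurd he h⟩
  · exact ⟨f ⟨e, e.2, he⟩, (f _).2, fun _ => rfl⟩

lemma unsubdivide_liftSubdivision (hT : T ≤ G) : unsubdivide (liftSubdivision T f) = T := by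
  refine edgeSet_injective (Set.ext fun e => ?_)
  by_cases hG : e ∈ G.edgeSet
  · refine (mem_edgeSet_unsubdivide ⟨e, hG⟩).trans
      ⟨fun h => ?_, fun h v hv => ⟨hv, fun h' => (h' h).elim⟩⟩
    by_contra hTe
    induction e using Sym2.ind with
    | _ a b =>
      have ha := (h a (Sym2.mem_mk_left a b)).2 hTe
      have hb := (h b (Sym2.mem_mk_right a b)).2 hTe
      exact (G.mem_edgeSet.mp hG).ne (ha.symm.trans hb)
  · exact iff_of_false (fun h => hG (edgeSet_mono unsubdivide_le h))
      (fun h => hG (edgeSet_mono hT h))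

lemma liftSubdivision_connected (hT : T ≤ G) (hconn : T.Connected) :
    (liftSubdivision T f).Connected := by
  have hstep : ∀ a b, T.Adj a b → (liftSubdivision T f).Reachable (inl a) (inl b) := by
    intro a b h
    have hab : s(a, b) ∈ T.edgeSet := h
    let e : G.edgeSet := ⟨s(a, b), hT h⟩
    have ha : (liftSubdivision T f).Adj (inl a) (inr e) :=
      ⟨Sym2.mem_mk_left a b, fun h => (h hab).elim⟩
    have hb : (liftSubdivision T f).Adj (inr e) (inl b) :=
      ⟨Sym2.mem_mk_right a b, fun h => (h hab).elim⟩
    exact ha.reachable.trans hb.reachable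
  have hbase : ∀ x, ∃ u, (liftSubdivision T f).Reachable x (inl u) := by
    rintro (u | e)
    · exact ⟨u, .rfl⟩
    · obtain ⟨v, hv⟩ := liftSubdivision_exists_adj_inr f e
      exact ⟨v, hv.symm.reachable⟩
  have : Nonempty V := hconn.nonempty
  refine ⟨fun x y => ?_⟩
  obtain ⟨u, hu⟩ := hbase x
  obtain ⟨v, hv⟩ := hbase y
  exact hu.trans ((Reachable.lift inl hstep (hconn.preconnected u v)).trans hv.symm)

lemma liftSubdivision_isTree [Finite V] (hT : T ≤ G) (htree : T.IsTree) :
    (liftSubdivision T f).IsTree := by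
  rw [isTree_iff_connected_and_card] at htree ⊢
  refine ⟨liftSubdivision_connected f hT htree.1, ?_⟩
  rw [card_edgeSet_of_le_subdivision (liftSubdivision_le f) (liftSubdivision_exists_adj_inr f),
    unsubdivide_liftSubdivision f hT, Nat.card_sum]
  omega

end Lift

noncomputable def spanningTreesSubdivisionEquiv [Finite V] :
    (Σ T : {T : SimpleGraph V // T ≤ G ∧ T.IsTree}, EndpointChoice G T.1) ≃
      {K : SimpleGraph (V ⊕ G.edgeSet) // K ≤ subdivision G ∧ K.IsTree} := by
  refine Equiv.ofBijective (fun p => ⟨liftSubdivision p.1.1 p.2, liftSubdivision_le p.2,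
    liftSubdivision_isTree p.2 p.1.2.1 p.1.2.2⟩) ⟨?_, ?_⟩
  · rintro ⟨⟨T, hT⟩, f⟩ ⟨⟨T', hT'⟩, f'⟩ h
    have hK : liftSubdivision T f = liftSubdivision T' f' := congrArg Subtype.val h
    obtain rfl : T = T' := (unsubdivide_liftSubdivision (T := T) f hT.1).symm.trans
      ((congrArg unsubdivide hK).trans (unsubdivide_liftSubdivision (T := T') f' hT'.1))
    obtain rfl : f = f' := funext fun e => Subtype.ext <| by
      have hf : (liftSubdivision T f).Adj (inl (f e : V)) (inr ⟨e, e.2.1⟩) :=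
        ⟨(f e).2, fun _ => rfl⟩
      rw [hK] at hf
      exact (hf.2 e.2.2).symm
    rfl
  · rintro ⟨K, hK, hKt⟩
    choose half hhalf using hKt.connected.exists_adj_inr hK
    refine ⟨⟨⟨unsubdivide K, unsubdivide_le, unsubdivide_isTree hK hKt⟩,
      fun e => ⟨half ⟨e, e.2.1⟩, hK (hhalf _)⟩⟩, Subtype.ext ?_⟩
    refine le_subdivision_ext (liftSubdivision_le _) hK fun v e => ?_
    by_cases he : (e : Sym2 V) ∈ (unsubdivide K).edgeSet
    · exact ⟨fun h => (mem_edgeSet_unsubdivide e).mp he v h.1,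
        fun h => ⟨hK h, fun h' => (h' he).elim⟩⟩
    · refine ⟨fun h => h.2 he ▸ hhalf e, fun h => ⟨hK h, fun _ => ?_⟩⟩
      by_contra hne
      exact he (mem_edgeSet_unsubdivide_of_adj_inr hK (hhalf e) h hne)

/-- Truncated subtraction: this is the circuit rank `|E| - |V| + 1` as soon as `|V| ≤ |E| + 1`,
in particular for connected graphs. -/
noncomputable def circuitRank (G : SimpleGraph V) : ℕ := Nat.card G.edgeSet + 1 - Nat.card V

lemma card_endpointChoice_of_isTree [Finite V] {T : SimpleGraph V} (hT : T ≤ G)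
    (htree : T.IsTree) :
    Nat.card (EndpointChoice G T) = 2 ^ circuitRank G := by
  have := Fintype.ofFinite ↥(G.edgeSet \ T.edgeSet)
  have hcard := (isTree_iff_connected_and_card.mp htree).2
  rw [Nat.card_pi, Finset.prod_congr rfl fun e _ => card_mem_sym2_of_mem_edgeSet e.2.1,
    Finset.prod_const, Finset.card_univ, ← Nat.card_eq_fintype_card, Nat.card_coe_set_eq,
    Set.ncard_sdiff (edgeSet_mono hT), ← Nat.card_coe_set_eq, ← Nat.card_coe_set_eq,
    circuitRank]
  congr 1
  omega

lemma numSpanningTrees_subdivision [Finite V] (G : SimpleGraph V) :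
    numSpanningTrees (subdivision G) = 2 ^ circuitRank G * numSpanningTrees G := by
  have := Fintype.ofFinite {T : SimpleGraph V // T ≤ G ∧ T.IsTree}
  rw [numSpanningTrees_eq_card, numSpanningTrees_eq_card,
    ← Nat.card_congr spanningTreesSubdivisionEquiv, Nat.card_sigma,
    Finset.sum_congr rfl fun T _ => card_endpointChoice_of_isTree T.2.1 T.2.2, Finset.sum_const,
    Finset.card_univ, smul_eq_mul, mul_comm, Nat.card_eq_fintype_card]

lemma unsubdivide_subdivision : unsubdivide (subdivision G) = G := by
  refine edgeSet_injective
    (Set.ext fun e => ⟨fun h => edgeSet_mono unsubdivide_le h, fun h => ?_⟩)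
  exact (mem_edgeSet_unsubdivide ⟨e, h⟩).mpr fun _ => id

lemma circuitRank_subdivision [Finite V] (G : SimpleGraph V) :
    circuitRank (subdivision G) = circuitRank G := by
  have hcard := card_edgeSet_of_le_subdivision (le_refl (subdivision G))
    fun e => ⟨(e : Sym2 V).out.1, Sym2.out_fst_mem _⟩
  rw [unsubdivide_subdivision] at hcard
  rw [circuitRank, circuitRank, hcard, Nat.card_sum]
  omega

lemma circuitRank_iterSubdiv [Finite V] (G : SimpleGraph V) (n : ℕ) :
    circuitRank (iterSubdiv G n).2 = circuitRank G := by
  induction n with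
  | zero => rfl
  | succ n ih =>
    have := iterSubdivFinite G n
    exact (circuitRank_subdivision _).trans ih

end SimpleGraph

theorem subdivision_spanningTrees_general {V : Type} [Finite V] (G : SimpleGraph V)
    (r : ℕ)
    (hr : (r : ℤ) = (Nat.card G.edgeSet : ℤ) - (Nat.card V : ℤ) + 1) :
    numSpanningTrees (subdivision G) = 2 ^ r * numSpanningTrees G ∧
    ∀ n : ℕ, numSpanningTrees (iterSubdiv G n).2 = 2 ^ (r * n) * numSpanningTrees G := by
  obtain rfl : r = circuitRank G := by
    rw [circuitRank]
    omega
  refine ⟨numSpanningTrees_subdivision G, fun n => ?_⟩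
  induction n with
  | zero => simp [iterSubdiv]
  | succ n ih =>
    have := iterSubdivFinite G n
    calc numSpanningTrees (iterSubdiv G (n + 1)).2
        = 2 ^ circuitRank (iterSubdiv G n).2 * numSpanningTrees (iterSubdiv G n).2 :=
          numSpanningTrees_subdivision _
      _ = 2 ^ (circuitRank G * (n + 1)) * numSpanningTrees G := by
          rw [circuitRank_iterSubdiv, ih, ← mul_assoc, ← pow_add, mul_add_one, add_comm]

/-- `N_st(s(G)) = 2^r · N_st(G)`, hence `N_st(sⁿ(G)) = 2^{rn} · N_st(G)`,
where `r = E₀ − N₀ + 1` is the circuit rank of `G`. -/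
theorem subdivision_spanningTrees {V : Type} [Finite V] (G : SimpleGraph V)
    (hG : G.Connected) (r : ℕ)
    (hr : (r : ℤ) = (Nat.card G.edgeSet : ℤ) - (Nat.card V : ℤ) + 1) :
    numSpanningTrees (subdivision G) = 2 ^ r * numSpanningTrees G ∧
    ∀ n : ℕ, numSpanningTrees (iterSubdiv G n).2 = 2 ^ (r * n) * numSpanningTrees G :=
  subdivision_spanningTrees_general G r hr
end

section
/- Let G be a simple connected graph with normalized adjacency matrix P₀ and let P₁ be the normalized adjacency matrix of the subdivision s(G). Suppose μ ≠ 0 is an eigenvalue of P₁ with eigenvector ψ. Then the restriction of ψ to the original vertices of G is an eigenvector of P₀ with eigenvalue 2μ² − 1; moreover, the value of ψ at the new vertex subdividing edge ij equals (ψ_i/√(2d_i) + ψ_j/√(2d_j))/μ, so ψ is determined by its restriction to the original vertices. -/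
open Matrix

lemma div_sqrt_two_mul_add_div_sqrt_two_mul_div {a b d d' : ℝ} (hd : 0 ≤ d) (hd' : 0 ≤ d') :
    (a / √(2 * d) + b / √(2 * d')) / √(2 * d) = a / (2 * d) + b / √(d * d') / 2 := by
  have hsq : √(2 * d) * √(2 * d) = 2 * d := Real.mul_self_sqrt (by positivity)
  have hmix : √(2 * d') * √(2 * d) = 2 * √(d * d') := by
    rw [← Real.sqrt_mul (by positivity), show 2 * d' * (2 * d) = 2 ^ 2 * (d * d') by ring,
      Real.sqrt_mul (by positivity), Real.sqrt_sq zero_le_two]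
  rw [add_div, div_div, div_div, hsq, hmix]
  ring

lemma sum_ite_mem_sym2_mk {V M : Type*} [Fintype V] [DecidableEq V] [AddCommMonoid M] {i j : V}
    (hij : i ≠ j) (f : V → M) : ∑ w, (if w ∈ s(i, j) then f w else 0) = f i + f j := by
  have hmem : ∀ w, w ∈ s(i, j) ↔ w ∈ ({i, j} : Finset V) := by simp
  simp_rw [hmem, Finset.sum_ite_mem, Finset.univ_inter, Finset.sum_pair hij]

namespace SimpleGraph

variable {V : Type} (G : SimpleGraph V)

lemma neighborSet_subdivision_inl (v : V) :
    (subdivision G).neighborSet (Sum.inl v) = Sum.inr '' {e : G.edgeSet | v ∈ (e : Sym2 V)} := by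
  ext (w | e) <;> simp [subdivision]

lemma neighborSet_subdivision_inr (e : G.edgeSet) :
    (subdivision G).neighborSet (Sum.inr e) = Sum.inl '' {w : V | w ∈ (e : Sym2 V)} := by
  ext (w | f) <;> simp [subdivision]

lemma card_neighborSet_subdivision_inl (v : V) :
    Nat.card ((subdivision G).neighborSet (Sum.inl v)) = Nat.card (G.neighborSet v) := by
  classical
  rw [neighborSet_subdivision_inl, Nat.card_image_of_injective Sum.inr_injective,
    ← Nat.card_congr (G.incidenceSetEquivNeighborSet v)]
  exact Nat.card_congr (Equiv.subtypeSubtypeEquivSubtypeInter (· ∈ G.edgeSet) (v ∈ ·))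

lemma card_neighborSet_subdivision_inr (e : G.edgeSet) :
    Nat.card ((subdivision G).neighborSet (Sum.inr e)) = 2 := by
  obtain ⟨e, he⟩ := e
  induction e using Sym2.ind with
  | _ i j =>
    rw [neighborSet_subdivision_inr, Nat.card_image_of_injective Sum.inl_injective,
      Nat.card_coe_set_eq]
    convert Set.ncard_pair (G.mem_edgeSet.mp he).ne
    ext; simp

lemma sum_ite_mem_edgeSet_eq_sum_neighborSet [DecidableEq V] [Fintype G.edgeSet] {M : Type*}
    [AddCommMonoid M] (v : V) [Fintype (G.neighborSet v)] (f : G.edgeSet → M) :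
    ∑ e : G.edgeSet, (if v ∈ (e : Sym2 V) then f e else 0) =
      ∑ w : G.neighborSet v, f ⟨s(v, w), G.mem_edgeSet.mpr w.2⟩ := by
  rw [← Finset.sum_filter,
    Finset.sum_subtype (p := fun e : G.edgeSet => v ∈ (e : Sym2 V)) _ (fun e => by simp)]
  exact Fintype.sum_equiv ((Equiv.subtypeSubtypeEquivSubtypeInter (· ∈ G.edgeSet) (v ∈ ·)).trans
    (G.incidenceSetEquivNeighborSet v)).symm _ _ (fun w => rfl) |>.symm

lemma normAdj_subdivision_inl_inl (v w : V) :
    normAdj (subdivision G) (Sum.inl v) (Sum.inl w) = 0 := by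
  simp [normAdj, subdivision]

lemma normAdj_subdivision_inr_inr (e f : G.edgeSet) :
    normAdj (subdivision G) (Sum.inr e) (Sum.inr f) = 0 := by
  simp [normAdj, subdivision]

lemma normAdj_subdivision_inl_inr [DecidableEq V] (v : V) (e : G.edgeSet) :
    normAdj (subdivision G) (Sum.inl v) (Sum.inr e) =
      if v ∈ (e : Sym2 V) then 1 / √(2 * Nat.card (G.neighborSet v)) else 0 := by
  by_cases h : v ∈ (e : Sym2 V)
  · have hadj : (subdivision G).Adj (Sum.inl v) (Sum.inr e) := h
    rw [if_pos h, normAdj, Matrix.of_apply, if_pos hadj, card_neighborSet_subdivision_inl,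
      card_neighborSet_subdivision_inr, mul_comm]
    norm_num
  · have hadj : ¬ (subdivision G).Adj (Sum.inl v) (Sum.inr e) := h
    rw [if_neg h, normAdj, Matrix.of_apply, if_neg hadj]

lemma normAdj_subdivision_inr_inl [DecidableEq V] (e : G.edgeSet) (v : V) :
    normAdj (subdivision G) (Sum.inr e) (Sum.inl v) =
      if v ∈ (e : Sym2 V) then 1 / √(2 * Nat.card (G.neighborSet v)) else 0 := by
  rw [← normAdj_subdivision_inl_inr, ← (normAdj_isHermitian _).apply]
  rfl

lemma normAdj_mulVec_apply [Fintype V] [DecidableRel G.Adj] (x : V → ℝ) (v : V) :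
    (normAdj G *ᵥ x) v =
      ∑ w : G.neighborSet v, x w / √(Nat.card (G.neighborSet v) * Nat.card (G.neighborSet w)) := by
  classical
  simp only [Matrix.mulVec, dotProduct, normAdj, Matrix.of_apply, ite_mul, zero_mul,
    one_div_mul_eq_div]
  rw [← Finset.sum_filter, Finset.sum_subtype (p := (· ∈ G.neighborSet v)) _ (fun w => by simp)]

variable [Fintype V] [Fintype G.edgeSet] (ψ : V ⊕ G.edgeSet → ℝ)

lemma normAdj_subdivision_mulVec_inl [DecidableEq V] (v : V) [Fintype (G.neighborSet v)] :
    (normAdj (subdivision G) *ᵥ ψ) (Sum.inl v) =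
      (∑ w : G.neighborSet v, ψ (Sum.inr ⟨s(v, w), G.mem_edgeSet.mpr w.2⟩)) /
        √(2 * Nat.card (G.neighborSet v)) := by
  simp only [Matrix.mulVec, dotProduct, Fintype.sum_sum_type, normAdj_subdivision_inl_inl,
    normAdj_subdivision_inl_inr, zero_mul, Finset.sum_const_zero, zero_add, ite_mul,
    sum_ite_mem_edgeSet_eq_sum_neighborSet, Finset.sum_div, one_div_mul_eq_div]

lemma normAdj_subdivision_mulVec_inr [DecidableEq V] (e : G.edgeSet) :
    (normAdj (subdivision G) *ᵥ ψ) (Sum.inr e) =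
      ∑ w : V,
        if w ∈ (e : Sym2 V) then ψ (Sum.inl w) / √(2 * Nat.card (G.neighborSet w)) else 0 := by
  simp only [Matrix.mulVec, dotProduct, Fintype.sum_sum_type, normAdj_subdivision_inr_inr,
    normAdj_subdivision_inr_inl, zero_mul, Finset.sum_const_zero, add_zero, ite_mul,
    one_div_mul_eq_div]

lemma normAdj_subdivision_mulVec_inr_mk {i j : V} (hij : G.Adj i j) :
    (normAdj (subdivision G) *ᵥ ψ) (Sum.inr ⟨s(i, j), G.mem_edgeSet.mpr hij⟩) =
      ψ (Sum.inl i) / √(2 * Nat.card (G.neighborSet i)) +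
        ψ (Sum.inl j) / √(2 * Nat.card (G.neighborSet j)) := by
  classical
  rw [normAdj_subdivision_mulVec_inr]
  exact sum_ite_mem_sym2_mk hij.ne _

theorem normAdj_mulVec_comp_inl_of_subdivision {μ : ℝ} (hμ : μ ≠ 0)
    (heig : normAdj (subdivision G) *ᵥ ψ = μ • ψ) :
    normAdj G *ᵥ (ψ ∘ Sum.inl) = (2 * μ ^ 2 - 1) • (ψ ∘ Sum.inl) := by
  classical
  funext v
  set d : V → ℝ := fun w => Nat.card (G.neighborSet w)
  have hvertex : μ * ψ (Sum.inl v) =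
      (∑ w : G.neighborSet v, ψ (Sum.inr ⟨s(v, w), G.mem_edgeSet.mpr w.2⟩)) / √(2 * d v) := by
    rw [← normAdj_subdivision_mulVec_inl, heig]
    rfl
  have hedge : ∀ w : G.neighborSet v, μ * ψ (Sum.inr ⟨s(v, w), G.mem_edgeSet.mpr w.2⟩) =
      ψ (Sum.inl v) / √(2 * d v) + ψ (Sum.inl w) / √(2 * d w) := fun w => by
    rw [← normAdj_subdivision_mulVec_inr_mk _ _ w.2, heig]
    rfl
  have hsquare : μ * (μ * ψ (Sum.inl v)) =
      d v * ψ (Sum.inl v) / (2 * d v) + (normAdj G *ᵥ (ψ ∘ Sum.inl)) v / 2 := by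
    have hd0 : ∀ w, 0 ≤ d w := fun w => Nat.cast_nonneg _
    rw [hvertex, normAdj_mulVec_apply, mul_div_assoc', Finset.mul_sum, Finset.sum_div,
      Finset.sum_congr rfl fun w _ => by
        rw [hedge, div_sqrt_two_mul_add_div_sqrt_two_mul_div (hd0 v) (hd0 w)],
      Finset.sum_add_distrib, Finset.sum_const, Finset.card_univ, nsmul_eq_mul, ← Finset.sum_div,
      ← Nat.card_eq_fintype_card, mul_div_assoc]
    rfl
  have hdiag : d v * ψ (Sum.inl v) / (2 * d v) = ψ (Sum.inl v) / 2 := by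
    rcases eq_or_ne (d v) 0 with hd | hd
    · have hisolated : IsEmpty (G.neighborSet v) :=
        Finite.card_eq_zero_iff.mp (Nat.cast_eq_zero.mp hd)
      have hψv : ψ (Sum.inl v) = 0 := by simpa [hμ, Finset.univ_eq_empty] using hvertex
      simp [hψv]
    · field_simp
  simp only [Pi.smul_apply, smul_eq_mul, Function.comp_apply]
  linarith

theorem comp_inl_ne_zero_of_subdivision {μ : ℝ} (hμ : μ ≠ 0) (hψ : ψ ≠ 0)
    (heig : normAdj (subdivision G) *ᵥ ψ = μ • ψ) : ψ ∘ Sum.inl ≠ 0 := by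
  classical
  intro hzero
  apply hψ
  funext x
  rcases x with v | e
  · exact congrFun hzero v
  · have he := congrFun heig (Sum.inr e)
    have hψ_inl : ∀ w, ψ (Sum.inl w) = 0 := congrFun hzero
    simp only [normAdj_subdivision_mulVec_inr, hψ_inl, zero_div, ite_self, Finset.sum_const_zero,
      Pi.smul_apply, smul_eq_mul] at he
    simpa [hμ] using he.symm

end SimpleGraph

theorem subdivision_eigenvector_restriction_general {V : Type} [Fintype V]
    (G : SimpleGraph V) [Fintype G.edgeSet] (μ : ℝ) (hμ : μ ≠ 0)
    (ψ : V ⊕ G.edgeSet → ℝ) (hψ : ψ ≠ 0)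
    (heig : Matrix.mulVec (normAdj (subdivision G)) ψ = μ • ψ) :
    Matrix.mulVec (normAdj G) (ψ ∘ Sum.inl) = (2 * μ ^ 2 - 1) • (ψ ∘ Sum.inl) ∧
    ψ ∘ Sum.inl ≠ 0 ∧
    ∀ (i j : V) (hij : G.Adj i j),
      ψ (Sum.inr ⟨s(i, j), G.mem_edgeSet.mpr hij⟩) =
        (ψ (Sum.inl i) / Real.sqrt (2 * (Nat.card (G.neighborSet i) : ℝ)) +
            ψ (Sum.inl j) / Real.sqrt (2 * (Nat.card (G.neighborSet j) : ℝ))) / μ := by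
  refine ⟨G.normAdj_mulVec_comp_inl_of_subdivision ψ hμ heig,
    G.comp_inl_ne_zero_of_subdivision ψ hμ hψ heig, fun i j hij => ?_⟩
  rw [← G.normAdj_subdivision_mulVec_inr_mk ψ hij, heig, Pi.smul_apply, smul_eq_mul,
    mul_div_cancel_left₀ _ hμ]

/-- if `ψ` is an eigenvector of `P₁ = P(s(G))` for an eigenvalue `μ ≠ 0`,
then its restriction to original vertices is an eigenvector of `P₀ = P(G)` for
`2μ² − 1`, and the value at the new vertex on edge `ij` is
`(ψᵢ/√(2dᵢ) + ψⱼ/√(2dⱼ))/μ`, so `ψ` is determined by its restriction. -/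
theorem subdivision_eigenvector_restriction {V : Type} [Fintype V]
    (G : SimpleGraph V) [Fintype G.edgeSet] (hG : G.Connected) (μ : ℝ) (hμ : μ ≠ 0)
    (ψ : V ⊕ G.edgeSet → ℝ) (hψ : ψ ≠ 0)
    (heig : Matrix.mulVec (normAdj (subdivision G)) ψ = μ • ψ) :
    Matrix.mulVec (normAdj G) (ψ ∘ Sum.inl) = (2 * μ ^ 2 - 1) • (ψ ∘ Sum.inl) ∧
    ψ ∘ Sum.inl ≠ 0 ∧
    ∀ (i j : V) (hij : G.Adj i j),
      ψ (Sum.inr ⟨s(i, j), G.mem_edgeSet.mpr hij⟩) =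
        (ψ (Sum.inl i) / Real.sqrt (2 * (Nat.card (G.neighborSet i) : ℝ)) +
            ψ (Sum.inl j) / Real.sqrt (2 * (Nat.card (G.neighborSet j) : ℝ))) / μ :=
  subdivision_eigenvector_restriction_general G μ hμ ψ hψ heig
end
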